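/- arXiv:2003.03255 — 9 statements merged into one kernel-verified Lean document; each statement's English description precedes it below -/
import Mathlib

section
/- There is no function f : V → {0,1}, where V is the set of triples (a,b,c) ∈ {1,2,3}³ with a ≠ b and b ≠ c, such that for every 5-tuple (x',x,y,z,z') of colors in {1,2,3} with x' ≠ x, x ≠ y, y ≠ z, z ≠ z', the outputs u = f(x',x,y), v = f(x,y,z), w = f(y,z,z') satisfy: v = 1 implies u = 0 and w = 0, and v = 0 implies u = 1 or w = 1. -/
def Col : Set ℕ := {1, 2, 3}

def MisOK (u v w : Fin 2) : Prop :=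
  (v = 1 → u = 0 ∧ w = 0) ∧ (v = 0 → u = 1 ∨ w = 1)

set_option synthInstance.maxSize 4000 in
set_option synthInstance.maxHeartbeats 2000000 in
set_option maxHeartbeats 2000000 in
theorem stmt1 :
    ¬ ∃ f : ℕ → ℕ → ℕ → Fin 2,
      ∀ x' x y z z' : ℕ, x' ∈ Col → x ∈ Col → y ∈ Col → z ∈ Col → z' ∈ Col →
        x' ≠ x → x ≠ y → y ≠ z → z ≠ z' →
        MisOK (f x' x y) (f x y z) (f y z z') := by
  rintro ⟨f, H⟩
  have m1 : (1:ℕ) ∈ Col := by simp [Col]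
  have m2 : (2:ℕ) ∈ Col := by simp [Col]
  have m3 : (3:ℕ) ∈ Col := by simp [Col]
  have h0 := H 1 2 1 2 1 m1 m2 m1 m2 m1 (by norm_num) (by norm_num) (by norm_num) (by norm_num)
  have h1 := H 1 2 1 2 3 m1 m2 m1 m2 m3 (by norm_num) (by norm_num) (by norm_num) (by norm_num)
  have h2 := H 1 2 1 3 1 m1 m2 m1 m3 m1 (by norm_num) (by norm_num) (by norm_num) (by norm_num)
  have h3 := H 1 2 1 3 2 m1 m2 m1 m3 m2 (by norm_num) (by norm_num) (by norm_num) (by norm_num)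
  have h4 := H 1 2 3 1 2 m1 m2 m3 m1 m2 (by norm_num) (by norm_num) (by norm_num) (by norm_num)
  have h5 := H 1 2 3 1 3 m1 m2 m3 m1 m3 (by norm_num) (by norm_num) (by norm_num) (by norm_num)
  have h6 := H 1 2 3 2 1 m1 m2 m3 m2 m1 (by norm_num) (by norm_num) (by norm_num) (by norm_num)
  have h7 := H 1 2 3 2 3 m1 m2 m3 m2 m3 (by norm_num) (by norm_num) (by norm_num) (by norm_num)
  have h8 := H 1 3 1 2 1 m1 m3 m1 m2 m1 (by norm_num) (by norm_num) (by norm_num) (by norm_num)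
  have h9 := H 1 3 1 2 3 m1 m3 m1 m2 m3 (by norm_num) (by norm_num) (by norm_num) (by norm_num)
  have h10 := H 1 3 1 3 1 m1 m3 m1 m3 m1 (by norm_num) (by norm_num) (by norm_num) (by norm_num)
  have h11 := H 1 3 1 3 2 m1 m3 m1 m3 m2 (by norm_num) (by norm_num) (by norm_num) (by norm_num)
  have h12 := H 1 3 2 1 2 m1 m3 m2 m1 m2 (by norm_num) (by norm_num) (by norm_num) (by norm_num)
  have h13 := H 1 3 2 1 3 m1 m3 m2 m1 m3 (by norm_num) (by norm_num) (by norm_num) (by norm_num)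
  have h14 := H 1 3 2 3 1 m1 m3 m2 m3 m1 (by norm_num) (by norm_num) (by norm_num) (by norm_num)
  have h15 := H 1 3 2 3 2 m1 m3 m2 m3 m2 (by norm_num) (by norm_num) (by norm_num) (by norm_num)
  have h16 := H 2 1 2 1 2 m2 m1 m2 m1 m2 (by norm_num) (by norm_num) (by norm_num) (by norm_num)
  have h17 := H 2 1 2 1 3 m2 m1 m2 m1 m3 (by norm_num) (by norm_num) (by norm_num) (by norm_num)
  have h18 := H 2 1 2 3 1 m2 m1 m2 m3 m1 (by norm_num) (by norm_num) (by norm_num) (by norm_num)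
  have h19 := H 2 1 2 3 2 m2 m1 m2 m3 m2 (by norm_num) (by norm_num) (by norm_num) (by norm_num)
  have h20 := H 2 1 3 1 2 m2 m1 m3 m1 m2 (by norm_num) (by norm_num) (by norm_num) (by norm_num)
  have h21 := H 2 1 3 1 3 m2 m1 m3 m1 m3 (by norm_num) (by norm_num) (by norm_num) (by norm_num)
  have h22 := H 2 1 3 2 1 m2 m1 m3 m2 m1 (by norm_num) (by norm_num) (by norm_num) (by norm_num)
  have h23 := H 2 1 3 2 3 m2 m1 m3 m2 m3 (by norm_num) (by norm_num) (by norm_num) (by norm_num)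
  have h24 := H 2 3 1 2 1 m2 m3 m1 m2 m1 (by norm_num) (by norm_num) (by norm_num) (by norm_num)
  have h25 := H 2 3 1 2 3 m2 m3 m1 m2 m3 (by norm_num) (by norm_num) (by norm_num) (by norm_num)
  have h26 := H 2 3 1 3 1 m2 m3 m1 m3 m1 (by norm_num) (by norm_num) (by norm_num) (by norm_num)
  have h27 := H 2 3 1 3 2 m2 m3 m1 m3 m2 (by norm_num) (by norm_num) (by norm_num) (by norm_num)
  have h28 := H 2 3 2 1 2 m2 m3 m2 m1 m2 (by norm_num) (by norm_num) (by norm_num) (by norm_num)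
  have h29 := H 2 3 2 1 3 m2 m3 m2 m1 m3 (by norm_num) (by norm_num) (by norm_num) (by norm_num)
  have h30 := H 2 3 2 3 1 m2 m3 m2 m3 m1 (by norm_num) (by norm_num) (by norm_num) (by norm_num)
  have h31 := H 2 3 2 3 2 m2 m3 m2 m3 m2 (by norm_num) (by norm_num) (by norm_num) (by norm_num)
  have h32 := H 3 1 2 1 2 m3 m1 m2 m1 m2 (by norm_num) (by norm_num) (by norm_num) (by norm_num)
  have h33 := H 3 1 2 1 3 m3 m1 m2 m1 m3 (by norm_num) (by norm_num) (by norm_num) (by norm_num)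
  have h34 := H 3 1 2 3 1 m3 m1 m2 m3 m1 (by norm_num) (by norm_num) (by norm_num) (by norm_num)
  have h35 := H 3 1 2 3 2 m3 m1 m2 m3 m2 (by norm_num) (by norm_num) (by norm_num) (by norm_num)
  have h36 := H 3 1 3 1 2 m3 m1 m3 m1 m2 (by norm_num) (by norm_num) (by norm_num) (by norm_num)
  have h37 := H 3 1 3 1 3 m3 m1 m3 m1 m3 (by norm_num) (by norm_num) (by norm_num) (by norm_num)
  have h38 := H 3 1 3 2 1 m3 m1 m3 m2 m1 (by norm_num) (by norm_num) (by norm_num) (by norm_num)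
  have h39 := H 3 1 3 2 3 m3 m1 m3 m2 m3 (by norm_num) (by norm_num) (by norm_num) (by norm_num)
  have h40 := H 3 2 1 2 1 m3 m2 m1 m2 m1 (by norm_num) (by norm_num) (by norm_num) (by norm_num)
  have h41 := H 3 2 1 2 3 m3 m2 m1 m2 m3 (by norm_num) (by norm_num) (by norm_num) (by norm_num)
  have h42 := H 3 2 1 3 1 m3 m2 m1 m3 m1 (by norm_num) (by norm_num) (by norm_num) (by norm_num)
  have h43 := H 3 2 1 3 2 m3 m2 m1 m3 m2 (by norm_num) (by norm_num) (by norm_num) (by norm_num)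
  have h44 := H 3 2 3 1 2 m3 m2 m3 m1 m2 (by norm_num) (by norm_num) (by norm_num) (by norm_num)
  have h45 := H 3 2 3 1 3 m3 m2 m3 m1 m3 (by norm_num) (by norm_num) (by norm_num) (by norm_num)
  have h46 := H 3 2 3 2 1 m3 m2 m3 m2 m1 (by norm_num) (by norm_num) (by norm_num) (by norm_num)
  have h47 := H 3 2 3 2 3 m3 m2 m3 m2 m3 (by norm_num) (by norm_num) (by norm_num) (by norm_num)
  simp only [MisOK] at h0 h1 h2 h3 h4 h5 h6 h7 h8 h9 h10 h11 h12 h13 h14 h15 h16 h17 h18 h19 h20 h21 h22 h23 h24 h25 h26 h27 h28 h29 h30 h31 h32 h33 h34 h35 h36 h37 h38 h39 h40 h41 h42 h43 h44 h45 h46 h47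
  revert h0 h1 h2 h3 h4 h5 h6 h7 h8 h9 h10 h11 h12 h13 h14 h15 h16 h17 h18 h19 h20 h21 h22 h23 h24 h25 h26 h27 h28 h29 h30 h31 h32 h33 h34 h35 h36 h37 h38 h39 h40 h41 h42 h43 h44 h45 h46 h47
  clear H
  generalize f 1 2 1 = a0
  generalize f 1 2 3 = a1
  generalize f 1 3 1 = a2
  generalize f 1 3 2 = a3
  generalize f 2 1 2 = a4
  generalize f 2 1 3 = a5
  generalize f 2 3 1 = a6
  generalize f 2 3 2 = a7
  generalize f 3 1 2 = a8
  generalize f 3 1 3 = a9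
  generalize f 3 2 1 = a10
  generalize f 3 2 3 = a11
  revert a0 a1 a2 a3 a4 a5 a6 a7 a8 a9 a10 a11
  decide
end

section
/- For every ordered triple (x,y,z) of pairwise distinct elements of {1,2,3}, and every function f : V → {0,1} on the set V of triples (a,b,c) ∈ {1,2,3}³ with a ≠ b, b ≠ c, satisfying the 1-round MIS-correctness condition (for every proper 5-tuple (x',x,y,z,z'), f(v)=1 for the middle view implies f=0 on the two adjacent views, and f(v)=0 implies f=1 on at least one adjacent view), exactly one of f(x,y,z), f(y,z,x), f(z,x,y) equals 1. -/
/-- The 1-round MIS-correctness condition for a map on views. -/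
def MisCond (f : ℕ → ℕ → ℕ → Fin 2) : Prop :=
  ∀ c1 c2 c3 c4 c5 : ℕ, c1 ∈ Col → c2 ∈ Col → c3 ∈ Col → c4 ∈ Col → c5 ∈ Col →
    c1 ≠ c2 → c2 ≠ c3 → c3 ≠ c4 → c4 ≠ c5 →
    MisOK (f c1 c2 c3) (f c2 c3 c4) (f c3 c4 c5)

theorem stmt2 :
    ∀ f : ℕ → ℕ → ℕ → Fin 2, MisCond f →
      ∀ x y z : ℕ, x ∈ Col → y ∈ Col → z ∈ Col → x ≠ y → y ≠ z → x ≠ z →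
        ((f x y z = 1 ∧ f y z x = 0 ∧ f z x y = 0) ∨
         (f x y z = 0 ∧ f y z x = 1 ∧ f z x y = 0) ∨
         (f x y z = 0 ∧ f y z x = 0 ∧ f z x y = 1)) := by
  intro f hf x y z hx hy hz hxy hyz hxz
  have h1 := hf z x y z x hz hx hy hz hx (Ne.symm hxz) hxy hyz (Ne.symm hxz)
  have h2 := hf x y z x y hx hy hz hx hy hxy hyz (Ne.symm hxz) hxy
  have h3 := hf y z x y z hy hz hx hy hz hyz (Ne.symm hxz) hxy hyz
  generalize f x y z = a at *
  generalize f y z x = b at *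
  generalize f z x y = c at *
  revert h1 h2 h3
  revert a b c
  dsimp only [MisOK]
  decide
end

section
/- Define f on views (a,b,c) ∈ {1,2,3}³ with a ≠ b, b ≠ c by: f(a,b,c) = 1 if b = 1, or (a,b,c) = (3,2,3); and f(a,b,c) = 0 otherwise. Then for every 5-tuple (c₁,c₂,c₃,c₄,c₅) of colors with consecutive entries distinct and (c₁,c₂,c₃,c₄,c₅) ≠ (1,2,3,2,1), the outputs u = f(c₁,c₂,c₃), v = f(c₂,c₃,c₄), w = f(c₃,c₄,c₅) satisfy the MIS condition: v = 1 → (u = 0 ∧ w = 0) and v = 0 → (u = 1 ∨ w = 1). -/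
/-- The 1-round map: output 1 iff own color is 1, or the view is (3,2,3). -/
def f4 (a b c : ℕ) : Fin 2 := if b = 1 ∨ (a = 3 ∧ b = 2 ∧ c = 3) then 1 else 0

theorem stmt4 :
    ∀ c1 c2 c3 c4 c5 : ℕ, c1 ∈ Col → c2 ∈ Col → c3 ∈ Col → c4 ∈ Col → c5 ∈ Col →
      c1 ≠ c2 → c2 ≠ c3 → c3 ≠ c4 → c4 ≠ c5 →
      ¬ (c1 = 1 ∧ c2 = 2 ∧ c3 = 3 ∧ c4 = 2 ∧ c5 = 1) →
      MisOK (f4 c1 c2 c3) (f4 c2 c3 c4) (f4 c3 c4 c5) := by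
  intro c1 c2 c3 c4 c5 h1 h2 h3 h4 h5 n12 n23 n34 n45 hpat
  simp only [Col, Set.mem_insert_iff, Set.mem_singleton_iff] at h1 h2 h3 h4 h5
  rcases h1 with rfl|rfl|rfl <;> rcases h2 with rfl|rfl|rfl <;>
    rcases h3 with rfl|rfl|rfl <;> rcases h4 with rfl|rfl|rfl <;>
    rcases h5 with rfl|rfl|rfl <;>
    simp_all [MisOK, f4]
end

section
/- There is no function g : {1,2,3,4} × {1,2,3} → {0,1} mapping (ID, color) pairs to outputs such that for every triple ((x₋₁,c₋₁),(x₀,c₀),(x₁,c₁)) with x₋₁,x₀,x₁ pairwise distinct IDs in {1,2,3,4} and c₋₁ ≠ c₀, c₀ ≠ c₁ colors in {1,2,3}, the outputs u = g(x₋₁,c₋₁), v = g(x₀,c₀), w = g(x₁,c₁) satisfy v = 1 → (u = 0 ∧ w = 0) and v = 0 → (u = 1 ∨ w = 1). -/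
def ID4 : Set ℕ := {1, 2, 3, 4}

lemma third_id (a b : ℕ) (ha : a ∈ ID4) (hb : b ∈ ID4) :
    ∃ c, c ∈ ID4 ∧ c ≠ a ∧ c ≠ b := by
  simp only [ID4, Set.mem_insert_iff, Set.mem_singleton_iff] at ha hb
  rcases ha with rfl | rfl | rfl | rfl <;> rcases hb with rfl | rfl | rfl | rfl <;>
    first
      | (refine ⟨1, ?_⟩; norm_num [ID4, Set.mem_insert_iff, Set.mem_singleton_iff]; done)
      | (refine ⟨2, ?_⟩; norm_num [ID4, Set.mem_insert_iff, Set.mem_singleton_iff]; done)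
      | (refine ⟨3, ?_⟩; norm_num [ID4, Set.mem_insert_iff, Set.mem_singleton_iff]; done)
      | (refine ⟨4, ?_⟩; norm_num [ID4, Set.mem_insert_iff, Set.mem_singleton_iff]; done)

lemma two_ids (a b : ℕ) (ha : a ∈ ID4) (hb : b ∈ ID4) :
    ∃ c d, c ∈ ID4 ∧ d ∈ ID4 ∧ c ≠ d ∧ c ≠ a ∧ c ≠ b ∧ d ≠ a ∧ d ≠ b := by
  simp only [ID4, Set.mem_insert_iff, Set.mem_singleton_iff] at ha hb
  rcases ha with rfl | rfl | rfl | rfl <;> rcases hb with rfl | rfl | rfl | rfl <;>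
    first
      | (refine ⟨1, 2, ?_⟩; norm_num [ID4, Set.mem_insert_iff, Set.mem_singleton_iff]; done)
      | (refine ⟨1, 3, ?_⟩; norm_num [ID4, Set.mem_insert_iff, Set.mem_singleton_iff]; done)
      | (refine ⟨1, 4, ?_⟩; norm_num [ID4, Set.mem_insert_iff, Set.mem_singleton_iff]; done)
      | (refine ⟨2, 3, ?_⟩; norm_num [ID4, Set.mem_insert_iff, Set.mem_singleton_iff]; done)
      | (refine ⟨2, 4, ?_⟩; norm_num [ID4, Set.mem_insert_iff, Set.mem_singleton_iff]; done)
      | (refine ⟨3, 4, ?_⟩; norm_num [ID4, Set.mem_insert_iff, Set.mem_singleton_iff]; done)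

lemma other_col (b : ℕ) (hb : b ∈ Col) : ∃ a, a ∈ Col ∧ a ≠ b := by
  simp only [Col, Set.mem_insert_iff, Set.mem_singleton_iff] at hb
  rcases hb with rfl | rfl | rfl
  · (refine ⟨2, ?_⟩; norm_num [Col, Set.mem_insert_iff, Set.mem_singleton_iff]; done)
  · (refine ⟨1, ?_⟩; norm_num [Col, Set.mem_insert_iff, Set.mem_singleton_iff]; done)
  · (refine ⟨1, ?_⟩; norm_num [Col, Set.mem_insert_iff, Set.mem_singleton_iff]; done)

lemma third_col (a b : ℕ) (ha : a ∈ Col) (hb : b ∈ Col) :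
    ∃ c, c ∈ Col ∧ c ≠ a ∧ c ≠ b := by
  simp only [Col, Set.mem_insert_iff, Set.mem_singleton_iff] at ha hb
  rcases ha with rfl | rfl | rfl <;> rcases hb with rfl | rfl | rfl <;>
    first
      | (refine ⟨1, ?_⟩; norm_num [Col, Set.mem_insert_iff, Set.mem_singleton_iff]; done)
      | (refine ⟨2, ?_⟩; norm_num [Col, Set.mem_insert_iff, Set.mem_singleton_iff]; done)
      | (refine ⟨3, ?_⟩; norm_num [Col, Set.mem_insert_iff, Set.mem_singleton_iff]; done)

lemma fin2_cases (a : Fin 2) : a = 0 ∨ a = 1 := by fin_cases a <;> simp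

theorem stmt5 :
    ¬ ∃ g : ℕ → ℕ → Fin 2,
      ∀ xa xb xc : ℕ, xa ∈ ID4 → xb ∈ ID4 → xc ∈ ID4 →
        xa ≠ xb → xb ≠ xc → xa ≠ xc →
        ∀ ca cb cc : ℕ, ca ∈ Col → cb ∈ Col → cc ∈ Col → ca ≠ cb → cb ≠ cc →
          MisOK (g xa ca) (g xb cb) (g xc cc) := by
  rintro ⟨g, hg⟩
  -- Step 0: there is some (b, β) on which g outputs 1.
  have hex : ∃ b β, b ∈ ID4 ∧ β ∈ Col ∧ g b β = 1 := by
    have h := hg 1 2 3 (by norm_num [ID4, Set.mem_insert_iff, Set.mem_singleton_iff]) (by norm_num [ID4, Set.mem_insert_iff, Set.mem_singleton_iff]) (by norm_num [ID4, Set.mem_insert_iff, Set.mem_singleton_iff]; done)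
      (by norm_num) (by norm_num) (by norm_num) 1 2 1
      (by norm_num [Col, Set.mem_insert_iff, Set.mem_singleton_iff]) (by norm_num [Col, Set.mem_insert_iff, Set.mem_singleton_iff]) (by norm_num [Col, Set.mem_insert_iff, Set.mem_singleton_iff]) (by norm_num) (by norm_num)
    rcases fin2_cases (g 2 2) with hz | ho
    · rcases h.2 hz with hL | hR
      · exact ⟨1, 1, by norm_num [ID4, Set.mem_insert_iff, Set.mem_singleton_iff], by norm_num [Col, Set.mem_insert_iff, Set.mem_singleton_iff], hL⟩
      · exact ⟨3, 1, by norm_num [ID4, Set.mem_insert_iff, Set.mem_singleton_iff], by norm_num [Col, Set.mem_insert_iff, Set.mem_singleton_iff], hR⟩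
    · exact ⟨2, 2, by norm_num [ID4, Set.mem_insert_iff, Set.mem_singleton_iff], by norm_num [Col, Set.mem_insert_iff, Set.mem_singleton_iff], ho⟩
  obtain ⟨b, β, hb, hβ, hbβ⟩ := hex
  -- Step A: every (a, α) with a ≠ b and α ≠ β gets output 0.
  have A : ∀ a, a ∈ ID4 → a ≠ b → ∀ α, α ∈ Col → α ≠ β → g a α = 0 := by
    intro a ha hab α hα hαβ
    obtain ⟨c, hc, hca, hcb⟩ := third_id a b ha hb
    have h := hg a b c ha hb hc hab (Ne.symm hcb) (Ne.symm hca) α β α hα hβ hα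
      hαβ (Ne.symm hαβ)
    exact (h.1 hbβ).1
  -- Step B: derive a contradiction.
  obtain ⟨α, hα, hαβ⟩ := other_col β hβ
  obtain ⟨γ, hγ, hγα, hγβ⟩ := third_col α β hα hβ
  obtain ⟨a, ha, hab, -⟩ := third_id b b hb hb
  obtain ⟨a1, a2, h1, h2, h12, h1a, h1b, h2a, h2b⟩ := two_ids a b ha hb
  have key := hg a1 a a2 h1 ha h2 h1a (Ne.symm h2a) h12 γ α γ hγ hα hγ
    hγα (Ne.symm hγα)
  have hA := A a ha hab α hα hαβ
  have hA1 := A a1 h1 h1b γ hγ hγβ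
  have hA2 := A a2 h2 h2b γ hγ hγβ
  rcases key.2 hA with h | h <;> simp_all
end

section
/- If there exists a function g : {1,...,24} × {1,2,3} → {0,1} such that for every triple of pairwise distinct IDs x₋₁,x₀,x₁ ∈ {1,...,24} and colors c₋₁ ≠ c₀, c₀ ≠ c₁ in {1,2,3}, the outputs u = g(x₋₁,c₋₁), v = g(x₀,c₀), w = g(x₁,c₁) satisfy v = 1 → (u = 0 ∧ w = 0) and v = 0 → (u = 1 ∨ w = 1), then there exists a function f : {1,2,3} → {0,1} such that for every triple (a,b,c) of colors with a ≠ b, b ≠ c, the triple (f(a),f(b),f(c)) satisfies the same MIS condition. -/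
/-- Correctness of a 0-round ID-based algorithm with IDs in {1,...,24}. -/
def IDCond (g : ℕ → ℕ → Fin 2) : Prop :=
  ∀ xa xb xc : ℕ, xa ∈ Finset.Icc 1 24 → xb ∈ Finset.Icc 1 24 → xc ∈ Finset.Icc 1 24 →
    xa ≠ xb → xb ≠ xc → xa ≠ xc →
    ∀ ca cb cc : ℕ, ca ∈ Col → cb ∈ Col → cc ∈ Col → ca ≠ cb → cb ≠ cc →
      MisOK (g xa ca) (g xb cb) (g xc cc)

theorem stmt7 :
    (∃ g : ℕ → ℕ → Fin 2, IDCond g) →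
    ∃ f : ℕ → Fin 2, ∀ a b c : ℕ, a ∈ Col → b ∈ Col → c ∈ Col →
      a ≠ b → b ≠ c → MisOK (f a) (f b) (f c) := by
  rintro ⟨g, hg⟩
  -- pigeonhole: 24 IDs into 8 behavior classes gives a class of size ≥ 3
  have hmap : ∀ x ∈ Finset.Icc 1 24,
      (fun x => (g x 1, g x 2, g x 3)) x ∈ (Finset.univ : Finset (Fin 2 × Fin 2 × Fin 2)) := by
    intro x _; exact Finset.mem_univ _
  have hcard : (Finset.univ : Finset (Fin 2 × Fin 2 × Fin 2)).card * 2 <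
      (Finset.Icc 1 24).card := by simp
  obtain ⟨k, -, hk⟩ :=
    Finset.exists_lt_card_fiber_of_mul_lt_card_of_maps_to hmap hcard
  obtain ⟨x, y, z, hx, hy, hz, hxy, hxz, hyz⟩ := Finset.two_lt_card_iff.mp hk
  simp only [Finset.mem_filter] at hx hy hz
  have key : ∀ w, (g w 1, g w 2, g w 3) = k →
      ∀ c ∈ Col, g w c = g x c := by
    intro w hw c hc
    have hx2 := hx.2
    rcases hc with rfl | rfl | rfl <;>
      simp_all [Prod.ext_iff]
  refine ⟨fun c => g x c, fun a b c ha hb hc hab hbc => ?_⟩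
  have := hg x y z hx.1 hy.1 hz.1 hxy hyz hxz a b c ha hb hc hab hbc
  rwa [key y hy.2 b hb, key z hz.2 c hc] at this
end

section
/- There is no function g : {1,...,24} × {1,2,3} → {0,1} such that for every triple of pairwise distinct IDs x₋₁,x₀,x₁ ∈ {1,...,24} and every triple of colors c₋₁,c₀,c₁ ∈ {1,2,3} with c₋₁ ≠ c₀ and c₀ ≠ c₁, the bits u = g(x₋₁,c₋₁), v = g(x₀,c₀), w = g(x₁,c₁) satisfy: v = 1 implies u = 0 and w = 0, and v = 0 implies u = 1 or w = 1. -/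
theorem stmt8 :
    ¬ ∃ g : ℕ → ℕ → Fin 2,
      ∀ xa xb xc : ℕ, xa ∈ Finset.Icc 1 24 → xb ∈ Finset.Icc 1 24 → xc ∈ Finset.Icc 1 24 →
        xa ≠ xb → xb ≠ xc → xa ≠ xc →
        ∀ ca cb cc : ℕ, ca ∈ Col → cb ∈ Col → cc ∈ Col → ca ≠ cb → cb ≠ cc →
          MisOK (g xa ca) (g xb cb) (g xc cc) := by
  rintro ⟨g, hg⟩
  have two : ∀ v : Fin 2, v = 0 ∨ v = 1 := by decide
  by_cases h : ∃ x, x ∈ Finset.Icc 1 24 ∧ ∃ c, c ∈ Col ∧ g x c = 1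
  · obtain ⟨x, hx, c, hc, hgc⟩ := h
    have hx' := Finset.mem_Icc.mp hx
    have key : ∀ y, y ∈ Finset.Icc 1 24 → y ≠ x → ∀ c', c' ∈ Col → c' ≠ c →
        g y c' = 0 := by
      intro y hy hyx c' hc' hc'c
      have hy' := Finset.mem_Icc.mp hy
      obtain ⟨z, hz, hzx, hzy⟩ : ∃ z : ℕ, (1 ≤ z ∧ z ≤ 24) ∧ z ≠ x ∧ z ≠ y := by
        by_cases e1 : x = 1
        · by_cases e2 : y = 2
          · exact ⟨3, by omega, by omega, by omega⟩
          · exact ⟨2, by omega, by omega, by omega⟩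
        · by_cases e2 : y = 1
          · by_cases e3 : x = 2
            · exact ⟨3, by omega, by omega, by omega⟩
            · exact ⟨2, by omega, by omega, by omega⟩
          · exact ⟨1, by omega, by omega, by omega⟩
      have hmem : z ∈ Finset.Icc 1 24 := Finset.mem_Icc.mpr hz
      have := hg y x z hy hx hmem hyx (fun h => hzx h.symm) (fun h => hzy h.symm)
        c' c c' hc' hc hc' hc'c (fun h => hc'c h.symm)
      exact (this.1 hgc).1
    obtain ⟨a, b, d, ha, hb, hd, hax, hbx, hdx, hab, hbd, had⟩ :
        ∃ a b d : ℕ, (1 ≤ a ∧ a ≤ 24) ∧ (1 ≤ b ∧ b ≤ 24) ∧ (1 ≤ d ∧ d ≤ 24) ∧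
          a ≠ x ∧ b ≠ x ∧ d ≠ x ∧ a ≠ b ∧ b ≠ d ∧ a ≠ d := by
      by_cases e1 : x = 1
      · exact ⟨2, 3, 4, by omega, by omega, by omega, by omega, by omega, by omega,
          by omega, by omega, by omega⟩
      · by_cases e2 : x = 2
        · exact ⟨1, 3, 4, by omega, by omega, by omega, by omega, by omega, by omega,
            by omega, by omega, by omega⟩
        · by_cases e3 : x = 3
          · exact ⟨1, 2, 4, by omega, by omega, by omega, by omega, by omega, by omega,
              by omega, by omega, by omega⟩
          · exact ⟨1, 2, 3, by omega, by omega, by omega, by omega, by omega, by omega,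
              by omega, by omega, by omega⟩
    have ha' : a ∈ Finset.Icc 1 24 := Finset.mem_Icc.mpr ha
    have hb' : b ∈ Finset.Icc 1 24 := Finset.mem_Icc.mpr hb
    have hd' : d ∈ Finset.Icc 1 24 := Finset.mem_Icc.mpr hd
    have final : ∀ p q : ℕ, p ∈ Col → q ∈ Col → p ≠ c → q ≠ c → p ≠ q → False := by
      intro p q hp hq hpc hqc hpq
      have hu : g a p = 0 := key a ha' hax p hp hpc
      have hv : g b q = 0 := key b hb' hbx q hq hqc
      have hw : g d p = 0 := key d hd' hdx p hp hpc
      have := hg a b d ha' hb' hd' hab hbd had p q p hp hq hp hpq (fun h => hpq h.symm)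
      rcases this.2 hv with h1 | h1
      · rw [hu] at h1; exact absurd h1 (by decide)
      · rw [hw] at h1; exact absurd h1 (by decide)
    have hc3 : c = 1 ∨ c = 2 ∨ c = 3 := by simpa [Col] using hc
    rcases hc3 with rfl | rfl | rfl
    · exact final 2 3 (by simp [Col]) (by simp [Col]) (by omega) (by omega) (by omega)
    · exact final 1 3 (by simp [Col]) (by simp [Col]) (by omega) (by omega) (by omega)
    · exact final 1 2 (by simp [Col]) (by simp [Col]) (by omega) (by omega) (by omega)
  · push_neg at h
    have hz : ∀ x, x ∈ Finset.Icc 1 24 → ∀ c, c ∈ Col → g x c = 0 := by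
      intro x hx c hc
      rcases two (g x c) with h0 | h1
      · exact h0
      · exact absurd h1 (h x hx c hc)
    have m1 : (1 : ℕ) ∈ Finset.Icc 1 24 := by simp
    have m2 : (2 : ℕ) ∈ Finset.Icc 1 24 := by simp
    have m3 : (3 : ℕ) ∈ Finset.Icc 1 24 := by simp
    have c1 : (1 : ℕ) ∈ Col := by simp [Col]
    have c2 : (2 : ℕ) ∈ Col := by simp [Col]
    have := hg 1 2 3 m1 m2 m3 (by omega) (by omega) (by omega) 1 2 1 c1 c2 c1
      (by omega) (by omega)
    rcases this.2 (hz 2 m2 2 c2) with h1 | h1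
    · rw [hz 1 m1 1 c1] at h1; exact absurd h1 (by decide)
    · rw [hz 3 m3 1 c1] at h1; exact absurd h1 (by decide)
end

section
/- Define alg on 2-round views, i.e., 5-tuples (c₁,c₂,c₃,c₄,c₅) ∈ {1,2,3}⁵ with consecutive entries distinct, by: alg(w) = 1 if c₃ = 1, or (c₃ = 3 and c₂ ≠ 1 and c₄ ≠ 1), or (c₃ = 2 and c₂' = c₄' = 0 where c₂' (resp. c₄') equals 1 iff c₂ = 1 or (c₂ = 3 and c₁ ≠ 1 and c₃ ≠ 1) — i.e., whether the left (resp. right) neighbor would be marked after the first recoloring round — and no neighbor is marked after round 2); formally, define h(a,b,c) = 1 if b = 1 or (b = 3 ∧ a ≠ 1 ∧ c ≠ 1), else 0, and alg(c₁,...,c₅) = 1 iff h(c₂,c₃,c₄) = 1 or (c₃ = 2 ∧ h(c₁,c₂,c₃) = 0 ∧ h(c₃,c₄,c₅) = 0). Then for every 7-tuple (c₁,...,c₇) of colors in {1,2,3} with consecutive entries distinct, the outputs u = alg(c₁,...,c₅), v = alg(c₂,...,c₆), w = alg(c₃,...,c₇) satisfy: v = 1 → (u = 0 ∧ w = 0)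 and v = 0 → (u = 1 ∨ w = 1). -/
/-- Marked after the first recoloring round: own color 1, or own color 3 with no neighbor colored 1. -/
def h10 (a b c : ℕ) : Fin 2 := if b = 1 ∨ (b = 3 ∧ a ≠ 1 ∧ c ≠ 1) then 1 else 0

/-- Linial's 2-round algorithm as a function of the 5 consecutive colors. -/
def alg10 (c1 c2 c3 c4 c5 : ℕ) : Fin 2 :=
  if h10 c2 c3 c4 = 1 ∨ (c3 = 2 ∧ h10 c1 c2 c3 = 0 ∧ h10 c3 c4 c5 = 0) then 1 else 0

instance (u v w : Fin 2) : Decidable (MisOK u v w) := by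
  unfold MisOK; infer_instance

instance {p q : Prop} [Decidable p] [Decidable q] : Decidable (p → q) := by
  by_cases hp : p
  · by_cases hq : q
    · exact isTrue fun _ => hq
    · exact isFalse fun h => hq (h hp)
  · exact isTrue fun h => absurd h hp

lemma aux10 : ∀ a b c d e f g : Fin 3,
    a ≠ b → b ≠ c → c ≠ d → d ≠ e → e ≠ f → f ≠ g →
    MisOK (alg10 (a.val+1) (b.val+1) (c.val+1) (d.val+1) (e.val+1))
          (alg10 (b.val+1) (c.val+1) (d.val+1) (e.val+1) (f.val+1))
          (alg10 (c.val+1) (d.val+1) (e.val+1) (f.val+1) (g.val+1)) := by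
  decide

lemma colRep {c : ℕ} (h : c ∈ Col) : ∃ a : Fin 3, c = a.val + 1 := by
  rcases h with rfl | rfl | rfl
  exacts [⟨0, rfl⟩, ⟨1, rfl⟩, ⟨2, rfl⟩]

theorem stmt10 :
    ∀ c1 c2 c3 c4 c5 c6 c7 : ℕ,
      c1 ∈ Col → c2 ∈ Col → c3 ∈ Col → c4 ∈ Col → c5 ∈ Col → c6 ∈ Col → c7 ∈ Col →
      c1 ≠ c2 → c2 ≠ c3 → c3 ≠ c4 → c4 ≠ c5 → c5 ≠ c6 → c6 ≠ c7 →
      MisOK (alg10 c1 c2 c3 c4 c5) (alg10 c2 c3 c4 c5 c6) (alg10 c3 c4 c5 c6 c7) := by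
  intro c1 c2 c3 c4 c5 c6 c7 h1 h2 h3 h4 h5 h6 h7 n1 n2 n3 n4 n5 n6
  obtain ⟨a, rfl⟩ := colRep h1
  obtain ⟨b, rfl⟩ := colRep h2
  obtain ⟨c, rfl⟩ := colRep h3
  obtain ⟨d, rfl⟩ := colRep h4
  obtain ⟨e, rfl⟩ := colRep h5
  obtain ⟨f, rfl⟩ := colRep h6
  obtain ⟨g, rfl⟩ := colRep h7
  apply aux10 <;> intro h <;> subst h <;> simp_all
end

section
/- Let k ≥ 2 and let f : {(x,y,z) ∈ ℕ³ : x < y < z} → {1,...,k} satisfy f(w,x,y) ≠ f(x,y,z) for all w < x < y < z. Define g on pairs x < y by g(x,y) = { f(a,x,y) : a < x }, a subset of {1,...,k}. Then for all x < y < z, g(x,y) ≠ g(y,z). -/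
theorem stmt11 :
    ∀ k : ℕ, 2 ≤ k → ∀ f : ℕ → ℕ → ℕ → Fin k,
      (∀ w x y z : ℕ, w < x → x < y → y < z → f w x y ≠ f x y z) →
      ∀ x y z : ℕ, x < y → y < z →
        {c : Fin k | ∃ a, a < x ∧ f a x y = c} ≠ {c : Fin k | ∃ a, a < y ∧ f a y z = c} := by
  intro k _ f hf x y z hxy hyz heq
  have hmem : f x y z ∈ {c : Fin k | ∃ a, a < y ∧ f a y z = c} := ⟨x, hxy, rfl⟩
  rw [← heq] at hmem
  obtain ⟨a, hax, ha⟩ := hmem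
  exact hf a x y z hax hxy hyz ha
end

section
/- Let k ≥ 1 and let f : {(x,y) ∈ ℕ² : x < y} → {1,...,k} satisfy f(x,y) ≠ f(y,z) for all x < y < z. For a finite ID set {1,...,N}, define g : {1,...,N} → P({1,...,k}) by g(y) = { f(y,z) : y < z ≤ N }. Then for all x < y < N, g(x) ≠ g(y). -/
theorem stmt12 :
    ∀ k N : ℕ, 1 ≤ k → ∀ f : ℕ → ℕ → Fin k,
      (∀ x y z : ℕ, x < y → y < z → f x y ≠ f y z) →
      ∀ x y : ℕ, x < y → y < N →
        {c : Fin k | ∃ z, x < z ∧ z ≤ N ∧ f x z = c} ≠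
        {c : Fin k | ∃ z, y < z ∧ z ≤ N ∧ f y z = c} := by
  intro k N hk f h x y hxy hyN heq
  have hmem : f x y ∈ {c : Fin k | ∃ z, x < z ∧ z ≤ N ∧ f x z = c} :=
    ⟨y, hxy, hyN.le, rfl⟩
  rw [heq] at hmem
  obtain ⟨z, hyz, _, hz⟩ := hmem
  exact h x y z hxy hyz hz.symm
end
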